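/- Let a, b, c, d be four distinct points on a common circle in the Euclidean plane such that b and c lie strictly on the same side of the line through a and d, and such that the unsigned angles satisfy ∠cad ≤ ∠bad ≤ ∠adc. Then |cd| ≤ |bd|. -/

import Mathlib

/-!
By the inscribed angle theorem a chord `pd` of a circle of radius `r` has length
`2 r sin ∠pad` for any third point `a` of the circle, so it suffices to compare `sin ∠cad` with
`sin ∠bad`. The angle sum of the triangle `cad` gives `∠adc ≤ π - ∠cad`, so
`∠cad ≤ ∠bad ≤ π - ∠cad`, and on that interval the sine is at least `sin ∠cad`.
-/

open EuclideanGeometry Module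
open scoped Real

theorem Real.sin_le_sin_of_le_of_le_pi_sub {x y : ℝ} (hx : 0 ≤ x) (hxy : x ≤ y)
    (hy : y ≤ π - x) : sin x ≤ sin y := by
  have hsin : 0 ≤ sin ((y - x) / 2) :=
    sin_nonneg_of_nonneg_of_le_pi (by linarith) (by linarith [pi_pos])
  have hcos : 0 ≤ cos ((y + x) / 2) :=
    cos_nonneg_of_mem_Icc ⟨by linarith [pi_pos], by linarith⟩
  rw [← sub_nonneg, sin_sub_sin]
  exact mul_nonneg (mul_nonneg zero_le_two hsin) hcos

theorem Real.Angle.abs_sin_eq_sin_abs_toReal (θ : Real.Angle) : |θ.sin| = Real.sin |θ.toReal| := by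
  rw [← Real.Angle.sin_toReal, Real.abs_sin_eq_sin_abs_of_abs_le_pi θ.abs_toReal_le_pi]

namespace EuclideanGeometry.Sphere

variable {V P : Type*} [NormedAddCommGroup V] [InnerProductSpace ℝ V] [MetricSpace P]
  [NormedAddTorsor V P] [Fact (finrank ℝ V = 2)]

theorem dist_eq_two_mul_radius_mul_sin_angle {s : Sphere P} {p₁ p₂ p₃ : P} (hp₁ : p₁ ∈ s)
    (hp₂ : p₂ ∈ s) (hp₃ : p₃ ∈ s) (hp₁p₂ : p₁ ≠ p₂) (hp₁p₃ : p₁ ≠ p₃) (hp₂p₃ : p₂ ≠ p₃) :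
    dist p₁ p₃ = 2 * s.radius * Real.sin (∠ p₁ p₂ p₃) := by
  have : FiniteDimensional ℝ V := .of_fact_finrank_eq_two
  let : Module.Oriented ℝ V (Fin 2) :=
    ⟨(finBasisOfFinrankEq ℝ V (Fact.out : finrank ℝ V = 2)).orientation⟩
  have hrule := dist_div_sin_oangle_eq_two_mul_radius hp₁ hp₂ hp₃ hp₁p₂ hp₁p₃ hp₂p₃
  rw [Real.Angle.abs_sin_eq_sin_abs_toReal, ← angle_eq_abs_oangle_toReal hp₁p₂ hp₂p₃.symm]
    at hrule
  -- The sine vanishes only if `2 * s.radius = 0`, i.e. `p₁` and `p₃` both coincide with the center.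
  have hsin : Real.sin (∠ p₁ p₂ p₃) ≠ 0 := by
    intro h0
    rw [h0, div_zero, eq_comm, mul_eq_zero, or_iff_right two_ne_zero] at hrule
    rw [mem_sphere, hrule, dist_eq_zero] at hp₁ hp₃
    exact hp₁p₃ (hp₁.trans hp₃.symm)
  rw [← hrule, div_mul_cancel₀ _ hsin]

end EuclideanGeometry.Sphere

theorem four_points_on_circle_dist_le_general
    (a b c d o : EuclideanSpace ℝ (Fin 2)) (r : ℝ)
    (ha : dist a o = r) (hb : dist b o = r) (hc : dist c o = r) (hd : dist d o = r)
    (hab : a ≠ b) (hac : a ≠ c) (had : a ≠ d)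
    (hbd : b ≠ d) (hcd : c ≠ d)
    (h1 : ∠ c a d ≤ ∠ b a d) (h2 : ∠ b a d ≤ ∠ a d c) :
    dist c d ≤ dist b d := by
  have : Fact (finrank ℝ (EuclideanSpace ℝ (Fin 2)) = 2) := ⟨finrank_euclideanSpace_fin⟩
  let s : Sphere (EuclideanSpace ℝ (Fin 2)) := ⟨o, r⟩
  have hcd_chord : dist c d = 2 * r * Real.sin (∠ c a d) :=
    Sphere.dist_eq_two_mul_radius_mul_sin_angle (s := s) hc ha hd hac.symm hcd had
  have hbd_chord : dist b d = 2 * r * Real.sin (∠ b a d) :=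
    Sphere.dist_eq_two_mul_radius_mul_sin_angle (s := s) hb ha hd hab.symm hbd had
  have hangle_sum : ∠ c a d + ∠ a d c + ∠ d c a = π :=
    angle_add_angle_add_angle_eq_pi d hac
  have hsin : Real.sin (∠ c a d) ≤ Real.sin (∠ b a d) :=
    Real.sin_le_sin_of_le_of_le_pi_sub (angle_nonneg c a d) h1
      (by linarith [angle_nonneg d c a])
  rw [hcd_chord, hbd_chord]
  exact mul_le_mul_of_nonneg_left hsin (by rw [← ha]; positivity)

/-- If `a`, `b`, `c`, `d` are four distinct points on a common circle such that `b` and `c`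
lie strictly on the same side of the line through `a` and `d`, and the unsigned angles
satisfy `∠ c a d ≤ ∠ b a d ≤ ∠ a d c`, then `|cd| ≤ |bd|`. -/
theorem four_points_on_circle_dist_le
    (a b c d o : EuclideanSpace ℝ (Fin 2)) (r : ℝ) (hr : 0 < r)
    (ha : dist a o = r) (hb : dist b o = r) (hc : dist c o = r) (hd : dist d o = r)
    (hab : a ≠ b) (hac : a ≠ c) (had : a ≠ d)
    (hbc : b ≠ c) (hbd : b ≠ d) (hcd : c ≠ d)
    (hside : (affineSpan ℝ ({a, d} : Set (EuclideanSpace ℝ (Fin 2)))).SSameSide b c)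
    (h1 : ∠ c a d ≤ ∠ b a d) (h2 : ∠ b a d ≤ ∠ a d c) :
    dist c d ≤ dist b d :=
  four_points_on_circle_dist_le_general a b c d o r ha hb hc hd hab hac had hbd hcd h1 h2
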